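/- If two group actions G ↷ X and H ↷ Y are configuration equivalent (Con(G ↷ X) = Con(H ↷ Y)), then they have the same Tarski number. -/
import Mathlib


open scoped Pointwise ENNReal

section Defs

variable (G X : Type*) [Group G] [MulAction G X]

/-- The action of `G` on `X` admits a paradoxical decomposition with `p + q` pieces:
pairwise disjoint subsets `A 1, ..., A p, B 1, ..., B q` of `X` and group elements
`g i`, `h j` such that `X = ⋃ g i • A i = ⋃ h j • B j`. -/
def IsParadoxicalWith (p q : ℕ) : Prop :=
  ∃ (A : Fin p → Set X) (B : Fin q → Set X) (g : Fin p → G) (h : Fin q → G),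
    (∀ i j, i ≠ j → Disjoint (A i) (A j)) ∧
    (∀ i j, i ≠ j → Disjoint (B i) (B j)) ∧
    (∀ i j, Disjoint (A i) (B j)) ∧
    (⋃ i, g i • A i) = Set.univ ∧ (⋃ j, h j • B j) = Set.univ

/-- The action admits a paradoxical decomposition. -/
def IsParadoxical : Prop := ∃ p q : ℕ, IsParadoxicalWith G X p q

/-- The Tarski number of the action: the least total number of pieces in a
paradoxical decomposition, or `⊤` if there is none. -/
noncomputable def tarskiNumber : ℕ∞ :=
  sInf {k : ℕ∞ | ∃ p q : ℕ, IsParadoxicalWith G X p q ∧ k = (p : ℕ∞) + (q : ℕ∞)}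

/-- The action `G ↷ X` is amenable: there is a finitely additive, `G`-invariant
measure `μ : P(X) → [0, ∞]` with `μ X = 1`. -/
def ActionAmenable : Prop :=
  ∃ μ : Set X → ℝ≥0∞,
    μ Set.univ = 1 ∧
    (∀ A B : Set X, Disjoint A B → μ (A ∪ B) = μ A + μ B) ∧
    ∀ (g : G) (A : Set X), μ (g • A) = μ A

end Defs

section Config

variable {G X : Type*} [Group G] [MulAction G X]

/-- `E` is a (finite, indexed) partition of `X`. -/
def IsPartition {m : ℕ} (E : Fin m → Set X) : Prop :=
  (∀ i j, i ≠ j → Disjoint (E i) (E j)) ∧ (⋃ i, E i) = Set.univ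

/-- `x₀(C) = E (C 0) ∩ ⋂ i, (g i)⁻¹ • E (C (i + 1))`. -/
def xZero {n m : ℕ} (g : Fin n → G) (E : Fin m → Set X)
    (C : Fin (n + 1) → Fin m) : Set X :=
  E (C 0) ∩ ⋂ i : Fin n, (g i)⁻¹ • E (C i.succ)

/-- The configuration set of the pair `(g, E)`: tuples `C = (C 0, ..., C n)` such that
some `x ∈ E (C 0)` satisfies `g i • x ∈ E (C (i+1))` for all `i`,
i.e. `x₀(C) ≠ ∅`. -/
def ConSet {n m : ℕ} (g : Fin n → G) (E : Fin m → Set X) :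
    Set (Fin (n + 1) → Fin m) :=
  {C | (xZero g E C).Nonempty}

/-- `x_j(C)`: equals `x₀(C)` for `j = 0` and `g j • x₀(C)` for `1 ≤ j ≤ n`. -/
def xJ {n m : ℕ} (g : Fin n → G) (E : Fin m → Set X)
    (j : Fin (n + 1)) (C : Fin (n + 1) → Fin m) : Set X :=
  Fin.cases (xZero g E C) (fun i => g i • xZero g E C) j

/-- `f` is a normalized solution of the system of configuration equations
`Eq(g, E; X)`: it is nonnegative, supported on configurations, sums to `1`,
and satisfies `∑ {f C : C j = i} = ∑ {f C : C 0 = i}` for all `j, i`. -/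
def IsNormalizedSolution {n m : ℕ} (g : Fin n → G) (E : Fin m → Set X)
    (f : (Fin (n + 1) → Fin m) → ℝ) : Prop :=
  (∀ C, 0 ≤ f C) ∧ (∀ C, C ∉ ConSet g E → f C = 0) ∧ (∑ C, f C) = 1 ∧
  ∀ (j : Fin n) (i : Fin m),
    (∑ C ∈ Finset.univ.filter fun C => C j.succ = i, f C) =
      ∑ C ∈ Finset.univ.filter fun C => C 0 = i, f C

/-- The system of configuration equations `Eq(g, E; X)` admits a normalized solution. -/
def HasNormalizedSolution {n m : ℕ} (g : Fin n → G) (E : Fin m → Set X) : Prop :=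
  ∃ f, IsNormalizedSolution g E f

end Config

/-- `Con(G ↷ X)`: the collection of all configuration sets of the action, recorded
together with the sizes `n` (of the tuple) and `m` (of the partition). -/
def ConCollection (G X : Type*) [Group G] [MulAction G X] :
    Set ((n : ℕ) × (m : ℕ) × Set (Fin (n + 1) → Fin m)) :=
  {S | ∃ (g : Fin S.1 → G) (E : Fin S.2.1 → Set X),
      IsPartition E ∧ S.2.2 = ConSet g E}

-- auxiliary
lemma fin_add_cases' {p q : ℕ} (k : Fin (p + q)) :
    (∃ i : Fin p, k = Fin.castAdd q i) ∨ ∃ j : Fin q, k = Fin.natAdd p j := by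
  by_cases h : (k : ℕ) < p
  · exact Or.inl ⟨⟨k, h⟩, by ext; simp⟩
  · exact Or.inr ⟨⟨k - p, by omega⟩, by ext; simp; omega⟩

lemma key_transfer {G X H Y : Type*} [Group G] [MulAction G X] [Group H] [MulAction H Y]
    (hsub : ConCollection G X ⊆ ConCollection H Y) {p q : ℕ}
    (hpq : IsParadoxicalWith G X p q) : IsParadoxicalWith H Y p q := by
  classical
  obtain ⟨A, B, g, h, hA, hB, hAB, hgA, hhB⟩ := hpq
  set E : Fin (p + q + 1) → Set X :=
    Fin.cons ((⋃ i, A i) ∪ ⋃ j, B j)ᶜ (Fin.append A B) with hE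
  set gg : Fin (p + q) → G := Fin.append (fun i => (g i)⁻¹) (fun j => (h j)⁻¹) with hgg
  -- E is a partition
  have hApp_subset : ∀ k : Fin (p + q), Fin.append A B k ⊆ (⋃ i, A i) ∪ ⋃ j, B j := by
    intro k
    rcases fin_add_cases' k with ⟨i, rfl⟩ | ⟨j, rfl⟩
    · rw [Fin.append_left]; exact (Set.subset_iUnion A i).trans Set.subset_union_left
    · rw [Fin.append_right]; exact (Set.subset_iUnion B j).trans Set.subset_union_right
  have hAppDisj : ∀ k l : Fin (p + q), k ≠ l →
      Disjoint (Fin.append A B k) (Fin.append A B l) := by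
    intro k l hkl
    rcases fin_add_cases' k with ⟨i, rfl⟩ | ⟨j, rfl⟩ <;>
      rcases fin_add_cases' l with ⟨i', rfl⟩ | ⟨j', rfl⟩
    · rw [Fin.append_left, Fin.append_left]
      refine hA i i' fun e => hkl (by rw [e])
    · rw [Fin.append_left, Fin.append_right]; exact hAB i j'
    · rw [Fin.append_right, Fin.append_left]; exact (hAB i' j).symm
    · rw [Fin.append_right, Fin.append_right]
      refine hB j j' fun e => hkl (by rw [e])
  have hEdisj : ∀ i j : Fin (p + q + 1), i ≠ j → Disjoint (E i) (E j) := by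
    intro i j hij
    rcases Fin.eq_zero_or_eq_succ i with rfl | ⟨k, rfl⟩ <;>
      rcases Fin.eq_zero_or_eq_succ j with rfl | ⟨l, rfl⟩
    · exact absurd rfl hij
    · rw [hE, Fin.cons_zero, Fin.cons_succ]
      exact (disjoint_compl_left_iff.mpr (hApp_subset l))
    · rw [hE, Fin.cons_zero, Fin.cons_succ]
      exact (disjoint_compl_left_iff.mpr (hApp_subset k)).symm
    · rw [hE, Fin.cons_succ, Fin.cons_succ]
      exact hAppDisj k l fun e => hij (by rw [e])
  have hEpart : IsPartition E := by
    refine ⟨hEdisj, ?_⟩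
    apply Set.eq_univ_of_forall
    intro x
    by_cases hx : x ∈ (⋃ i, A i) ∪ ⋃ j, B j
    · rcases hx with hx | hx
      · obtain ⟨i, hi⟩ := Set.mem_iUnion.mp hx
        exact Set.mem_iUnion.mpr ⟨(Fin.castAdd q i).succ, by
          rw [hE, Fin.cons_succ, Fin.append_left]; exact hi⟩
      · obtain ⟨j, hj⟩ := Set.mem_iUnion.mp hx
        exact Set.mem_iUnion.mpr ⟨(Fin.natAdd p j).succ, by
          rw [hE, Fin.cons_succ, Fin.append_right]; exact hj⟩
    · exact Set.mem_iUnion.mpr ⟨0, by rw [hE, Fin.cons_zero]; exact hx⟩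
  -- the configuration set of (gg, E) belongs to ConCollection G X
  have hmem : (⟨p + q, p + q + 1, ConSet gg E⟩ :
      (n : ℕ) × (m : ℕ) × Set (Fin (n + 1) → Fin m)) ∈ ConCollection G X :=
    ⟨gg, E, hEpart, rfl⟩
  obtain ⟨g', E', hE'part, hS⟩ := hsub hmem
  -- key fact: every configuration hits the A-block and the B-block
  have fact1 : ∀ C ∈ ConSet gg E,
      (∃ i : Fin p, C (Fin.castAdd q i).succ = (Fin.castAdd q i).succ) ∧
      (∃ j : Fin q, C (Fin.natAdd p j).succ = (Fin.natAdd p j).succ) := by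
    intro C ⟨x, hx0, hxs⟩
    rw [Set.mem_iInter] at hxs
    constructor
    · have : x ∈ ⋃ i, g i • A i := hgA ▸ Set.mem_univ x
      obtain ⟨i, hi⟩ := Set.mem_iUnion.mp this
      refine ⟨i, ?_⟩
      have h1 : gg (Fin.castAdd q i) • x ∈ E (Fin.castAdd q i).succ := by
        rw [hgg, Fin.append_left, hE, Fin.cons_succ, Fin.append_left]
        exact Set.mem_smul_set_iff_inv_smul_mem.mp (by simpa using hi)
      have h2 : gg (Fin.castAdd q i) • x ∈ E (C (Fin.castAdd q i).succ) :=
        Set.mem_inv_smul_set_iff.mp (hxs (Fin.castAdd q i))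
      by_contra hne
      exact Set.disjoint_left.mp (hEdisj _ _ hne) h2 h1
    · have : x ∈ ⋃ j, h j • B j := hhB ▸ Set.mem_univ x
      obtain ⟨j, hj⟩ := Set.mem_iUnion.mp this
      refine ⟨j, ?_⟩
      have h1 : gg (Fin.natAdd p j) • x ∈ E (Fin.natAdd p j).succ := by
        rw [hgg, Fin.append_right, hE, Fin.cons_succ, Fin.append_right]
        exact Set.mem_smul_set_iff_inv_smul_mem.mp (by simpa using hj)
      have h2 : gg (Fin.natAdd p j) • x ∈ E (C (Fin.natAdd p j).succ) :=
        Set.mem_inv_smul_set_iff.mp (hxs (Fin.natAdd p j))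
      by_contra hne
      exact Set.disjoint_left.mp (hEdisj _ _ hne) h2 h1
  -- on the Y side
  obtain ⟨hE'disj, hE'univ⟩ := hE'part
  have hidx : ∀ z : Y, ∃ t, z ∈ E' t := fun z =>
    Set.mem_iUnion.mp (hE'univ ▸ Set.mem_univ z)
  choose idx hidx using hidx
  set Cy : Y → (Fin (p + q + 1) → Fin (p + q + 1)) :=
    fun y => Fin.cases (idx y) (fun k => idx (g' k • y)) with hCydef
  have hCy : ∀ y : Y, Cy y ∈ ConSet g' E' := by
    intro y
    refine ⟨y, ?_, Set.mem_iInter.mpr fun k => ?_⟩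
    · rw [hCydef]; simpa using hidx y
    · rw [hCydef]
      simp only [Fin.cases_succ]
      exact Set.mem_inv_smul_set_iff.mpr (hidx (g' k • y))
  have hS' : ConSet gg E = ConSet g' E' := hS
  have hCy' : ∀ y : Y, Cy y ∈ ConSet gg E := fun y => hS' ▸ hCy y
  have hφ : ∀ y : Y, ∃ i : Fin p,
      g' (Fin.castAdd q i) • y ∈ E' (Fin.castAdd q i).succ := by
    intro y
    obtain ⟨⟨i, hi⟩, -⟩ := fact1 _ (hCy' y)
    refine ⟨i, ?_⟩
    rw [hCydef] at hi
    simp only [Fin.cases_succ] at hi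
    rw [← hi]; exact hidx _
  have hψ : ∀ y : Y, ∃ j : Fin q,
      g' (Fin.natAdd p j) • y ∈ E' (Fin.natAdd p j).succ := by
    intro y
    obtain ⟨-, ⟨j, hj⟩⟩ := fact1 _ (hCy' y)
    refine ⟨j, ?_⟩
    rw [hCydef] at hj
    simp only [Fin.cases_succ] at hj
    rw [← hj]; exact hidx _
  choose φ hφ using hφ
  choose ψ hψ using hψ
  refine ⟨fun i => g' (Fin.castAdd q i) • {y | φ y = i},
    fun j => g' (Fin.natAdd p j) • {y | ψ y = j},
    fun i => (g' (Fin.castAdd q i))⁻¹, fun j => (g' (Fin.natAdd p j))⁻¹,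
    ?_, ?_, ?_, ?_, ?_⟩
  · intro i j hij
    have sub1 : g' (Fin.castAdd q i) • {y | φ y = i} ⊆ E' (Fin.castAdd q i).succ := by
      rintro _ ⟨y, hy, rfl⟩; rw [Set.mem_setOf_eq] at hy; subst hy; exact hφ y
    have sub2 : g' (Fin.castAdd q j) • {y | φ y = j} ⊆ E' (Fin.castAdd q j).succ := by
      rintro _ ⟨y, hy, rfl⟩; rw [Set.mem_setOf_eq] at hy; subst hy; exact hφ y
    refine Disjoint.mono sub1 sub2 (hE'disj _ _ ?_)
    exact fun e => hij (Fin.castAdd_injective _ _ (Fin.succ_inj.mp e))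
  · intro i j hij
    have sub1 : g' (Fin.natAdd p i) • {y | ψ y = i} ⊆ E' (Fin.natAdd p i).succ := by
      rintro _ ⟨y, hy, rfl⟩; rw [Set.mem_setOf_eq] at hy; subst hy; exact hψ y
    have sub2 : g' (Fin.natAdd p j) • {y | ψ y = j} ⊆ E' (Fin.natAdd p j).succ := by
      rintro _ ⟨y, hy, rfl⟩; rw [Set.mem_setOf_eq] at hy; subst hy; exact hψ y
    refine Disjoint.mono sub1 sub2 (hE'disj _ _ ?_)
    intro e
    have h2 : ((Fin.natAdd p i : Fin (p + q)) : ℕ) = ((Fin.natAdd p j : Fin (p + q)) : ℕ) :=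
      congrArg Fin.val (Fin.succ_inj.mp e)
    simp only [Fin.coe_natAdd, Nat.add_right_inj] at h2
    exact hij (Fin.ext h2)
  · intro i j
    have sub1 : g' (Fin.castAdd q i) • {y | φ y = i} ⊆ E' (Fin.castAdd q i).succ := by
      rintro _ ⟨y, hy, rfl⟩; rw [Set.mem_setOf_eq] at hy; subst hy; exact hφ y
    have sub2 : g' (Fin.natAdd p j) • {y | ψ y = j} ⊆ E' (Fin.natAdd p j).succ := by
      rintro _ ⟨y, hy, rfl⟩; rw [Set.mem_setOf_eq] at hy; subst hy; exact hψ y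
    refine Disjoint.mono sub1 sub2 (hE'disj _ _ ?_)
    have hi := i.isLt
    simp only [ne_eq, Fin.ext_iff, Fin.val_succ, Fin.coe_castAdd, Fin.coe_natAdd]
    omega
  · apply Set.eq_univ_of_forall
    intro y
    refine Set.mem_iUnion.mpr ⟨φ y, ?_⟩
    rw [inv_smul_smul]
    exact rfl
  · apply Set.eq_univ_of_forall
    intro y
    refine Set.mem_iUnion.mpr ⟨ψ y, ?_⟩
    rw [inv_smul_smul]
    exact rfl

/-- Configuration equivalent group actions have the same Tarski number. -/
theorem stmt13 {G X H Y : Type*} [Group G] [MulAction G X] [Group H] [MulAction H Y]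
    (h : ConCollection G X = ConCollection H Y) :
    tarskiNumber G X = tarskiNumber H Y := by
  unfold tarskiNumber
  congr 1
  ext k
  simp only [Set.mem_setOf_eq]
  constructor
  · rintro ⟨p, q, hpq, hk⟩
    exact ⟨p, q, key_transfer h.le hpq, hk⟩
  · rintro ⟨p, q, hpq, hk⟩
    exact ⟨p, q, key_transfer h.ge hpq, hk⟩
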